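/- If X ~ Bin(m, p) with 0 < p < 1 and r = mp/2 (so r ≤ E[X] = mp), then P(X < r) ≤ exp(-mp·H(1/2)), where H(b) = 1 - b + b·log b. -/
import Mathlib


open scoped Classical

/-- `H b = 1 - b + b log b`. -/
noncomputable def Hfun (b : ℝ) : ℝ := 1 - b + b * Real.log b

/-- Probability that a `Bin(n,p)` variable equals `i`. -/
noncomputable def binomPMF (n : ℕ) (p : ℝ) (i : ℕ) : ℝ :=
  (n.choose i : ℝ) * p ^ i * (1 - p) ^ (n - i)

/-- For `X ~ Bin(m,p)` and threshold `r = mp/2`,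
`P(X < r) ≤ exp (- m p H(1/2))`. -/
theorem binomial_below_half_mean (m : ℕ) (p : ℝ) (hp0 : 0 < p) (hp1 : p < 1) :
    ∑ j ∈ (Finset.range (m + 1)).filter
        (fun i : ℕ => (i : ℝ) < (m : ℝ) * p / 2), binomPMF m p j
      ≤ Real.exp (-((m : ℝ) * p) * Hfun (1 / 2)) := by
  set r : ℝ := (m : ℝ) * p / 2 with hr
  set q : ℝ := 1 - p with hq
  have hq0 : 0 ≤ q := by simp [hq]; linarith
  have hp2 : 0 ≤ p / 2 := by linarith
  have key : ∀ j ∈ (Finset.range (m + 1)).filter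
      (fun i : ℕ => (i : ℝ) < r),
      binomPMF m p j ≤ (2 : ℝ) ^ r * ((m.choose j : ℝ) * (p / 2) ^ j * q ^ (m - j)) := by
    intro j hj
    have hjr : (j : ℝ) ≤ r := le_of_lt (Finset.mem_filter.mp hj).2
    have h2j : (2 : ℝ) ^ (j : ℝ) ≤ (2 : ℝ) ^ r :=
      Real.rpow_le_rpow_left_iff (x := (2:ℝ)) one_lt_two |>.mpr hjr
    have h2j' : ((2 : ℝ) ^ j : ℝ) ≤ (2 : ℝ) ^ r := by
      rwa [Real.rpow_natCast] at h2j
    have hb : binomPMF m p j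
        = ((2 : ℝ) ^ j) * ((m.choose j : ℝ) * (p / 2) ^ j * q ^ (m - j)) := by
      unfold binomPMF
      rw [hq]
      have : p ^ j = (2 : ℝ) ^ j * (p / 2) ^ j := by
        rw [← mul_pow]; ring_nf
      rw [this]; ring
    rw [hb]
    have hnn : 0 ≤ (m.choose j : ℝ) * (p / 2) ^ j * q ^ (m - j) := by
      positivity
    exact mul_le_mul_of_nonneg_right h2j' hnn
  calc ∑ j ∈ (Finset.range (m + 1)).filter (fun i : ℕ => (i : ℝ) < r), binomPMF m p j
      ≤ ∑ j ∈ (Finset.range (m + 1)).filter (fun i : ℕ => (i : ℝ) < r),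
          (2 : ℝ) ^ r * ((m.choose j : ℝ) * (p / 2) ^ j * q ^ (m - j)) :=
        Finset.sum_le_sum key
    _ ≤ ∑ j ∈ Finset.range (m + 1),
          (2 : ℝ) ^ r * ((m.choose j : ℝ) * (p / 2) ^ j * q ^ (m - j)) := by
        apply Finset.sum_le_sum_of_subset_of_nonneg (Finset.filter_subset _ _)
        intro i _ _
        have : (0:ℝ) ≤ (2 : ℝ) ^ r := (Real.rpow_pos_of_pos two_pos r).le
        positivity
    _ = (2 : ℝ) ^ r * (p / 2 + q) ^ m := by
        rw [← Finset.mul_sum, add_pow]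
        congr 1
        apply Finset.sum_congr rfl
        intro j _
        ring
    _ ≤ (2 : ℝ) ^ r * Real.exp (-(p/2)) ^ m := by
        apply mul_le_mul_of_nonneg_left _ (Real.rpow_pos_of_pos two_pos r).le
        apply pow_le_pow_left₀ (by rw [hq]; linarith)
        have := Real.add_one_le_exp (-(p/2))
        linarith
    _ = Real.exp (r * Real.log 2) * Real.exp (-(p/2) * m) := by
        rw [← Real.exp_nat_mul, Real.rpow_def_of_pos two_pos]
        ring_nf
    _ = Real.exp (-((m : ℝ) * p) * Hfun (1 / 2)) := by
        rw [← Real.exp_add]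
        congr 1
        unfold Hfun
        rw [Real.log_div one_ne_zero two_ne_zero, Real.log_one, hr]
        ring
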